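/- The logic CnK has the Disjunction Property and the Constructible Falsity Property: for all MD-formulas φ, ψ, (i) φ∨ψ ∈ CnK if and only if φ ∈ CnK or ψ ∈ CnK, and (ii) ¬(φ∧ψ) ∈ CnK if and only if ¬φ ∈ CnK or ¬ψ ∈ CnK. -/
import Mathlib


/-- Formulas of the modal language MD. -/
inductive MDForm : Type
  | atom : ℕ → MDForm
  | conj : MDForm → MDForm → MDForm
  | disj : MDForm → MDForm → MDForm
  | impl : MDForm → MDForm → MDForm
  | neg  : MDForm → MDForm
  | box  : MDForm → MDForm
  | dia  : MDForm → MDForm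

/-- A Fischer–Servi modal model. -/
structure FSModel where
  W : Type
  nonempty : Nonempty W
  le : W → W → Prop
  le_refl : ∀ w, le w w
  le_trans : ∀ {w v u}, le w v → le v u → le w u
  R : W → W → Prop
  fs1 : ∀ {w w' v}, le w w' → R w v → ∃ v', R w' v' ∧ le v v'
  fs2 : ∀ {w v v'}, R w v → le v v' → ∃ w', le w w' ∧ R w' v'
  Vpos : ℕ → W → Prop
  Vneg : ℕ → W → Prop
  Vpos_mono : ∀ (p : ℕ) {w v}, le w v → Vpos p w → Vpos p v
  Vneg_mono : ∀ (p : ℕ) {w v}, le w v → Vneg p w → Vneg p v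

/-- `M.sat true φ w` is verification `M,w ⊨⁺ φ`; `M.sat false φ w` is falsification `M,w ⊨⁻ φ`. -/
def FSModel.sat (M : FSModel) : Bool → MDForm → M.W → Prop
  | true,  .atom p,   w => M.Vpos p w
  | false, .atom p,   w => M.Vneg p w
  | true,  .conj φ ψ, w => M.sat true φ w ∧ M.sat true ψ w
  | false, .conj φ ψ, w => M.sat false φ w ∨ M.sat false ψ w
  | true,  .disj φ ψ, w => M.sat true φ w ∨ M.sat true ψ w
  | false, .disj φ ψ, w => M.sat false φ w ∧ M.sat false ψ w
  | true,  .impl φ ψ, w => ∀ v, M.le w v → M.sat true φ v → M.sat true ψ v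
  | false, .impl φ ψ, w => ∀ v, M.le w v → M.sat true φ v → M.sat false ψ v
  | true,  .neg φ,    w => M.sat false φ w
  | false, .neg φ,    w => M.sat true φ w
  | true,  .box φ,    w => ∀ v, M.le w v → ∀ u, M.R v u → M.sat true φ u
  | false, .box φ,    w => ∀ v, M.le w v → ∀ u, M.R v u → M.sat false φ u
  | true,  .dia φ,    w => ∃ u, M.R w u ∧ M.sat true φ u
  | false, .dia φ,    w => ∃ u, M.R w u ∧ M.sat false φ u

/-- CnK-validity: `φ ∈ CnK`. -/
def CnKvalid (φ : MDForm) : Prop :=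
  ∀ (M : FSModel) (w : M.W), M.sat true φ w

/-- The consequence relation of the logic CnK: `Γ ⊨_CnK Δ`. -/
def CnKconseq (Γ Δ : Set MDForm) : Prop :=
  ∀ (M : FSModel) (w : M.W), (∀ γ ∈ Γ, M.sat true γ w) → ∃ δ ∈ Δ, M.sat true δ w

/-- Persistence: satisfaction is monotone along `≤`. -/
theorem FSModel.sat_mono (M : FSModel) (φ : MDForm) :
    ∀ b {w v : M.W}, M.le w v → M.sat b φ w → M.sat b φ v := by
  induction φ with
  | atom p =>
    intro b w v h hs
    cases b
    · exact M.Vneg_mono p h hs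
    · exact M.Vpos_mono p h hs
  | conj φ ψ ihφ ihψ =>
    intro b w v h hs
    cases b
    · exact hs.imp (ihφ false h) (ihψ false h)
    · exact ⟨ihφ true h hs.1, ihψ true h hs.2⟩
  | disj φ ψ ihφ ihψ =>
    intro b w v h hs
    cases b
    · exact ⟨ihφ false h hs.1, ihψ false h hs.2⟩
    · exact hs.imp (ihφ true h) (ihψ true h)
  | impl φ ψ ihφ ihψ =>
    intro b w v h hs
    cases b
    · exact fun u hu hφ => hs u (M.le_trans h hu) hφ
    · exact fun u hu hφ => hs u (M.le_trans h hu) hφ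
  | neg φ ih =>
    intro b w v h hs
    cases b
    · exact ih true h hs
    · exact ih false h hs
  | box φ ih =>
    intro b w v h hs
    cases b
    · exact fun u hu x hx => hs u (M.le_trans h hu) x hx
    · exact fun u hu x hx => hs u (M.le_trans h hu) x hx
  | dia φ ih =>
    intro b w v h hs
    cases b <;>
    obtain ⟨u, hR, hu⟩ := hs <;>
    obtain ⟨u', hR', hle⟩ := M.fs1 h hR <;>
    exact ⟨u', hR', ih _ hle hu⟩

/-- The glued model: a fresh root below disjoint copies of `M₁` and `M₂`. -/
def glue (M₁ M₂ : FSModel) : FSModel where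
  W := Option (M₁.W ⊕ M₂.W)
  nonempty := ⟨none⟩
  le x y :=
    match x, y with
    | none, _ => True
    | some (.inl a), some (.inl b) => M₁.le a b
    | some (.inr a), some (.inr b) => M₂.le a b
    | _, _ => False
  le_refl x := by
    match x with
    | none => trivial
    | some (.inl a) => exact M₁.le_refl a
    | some (.inr a) => exact M₂.le_refl a
  le_trans {w v u} h1 h2 := by
    match w, v, u with
    | none, _, _ => trivial
    | some (.inl a), some (.inl b), some (.inl c) => exact M₁.le_trans h1 h2
    | some (.inr a), some (.inr b), some (.inr c) => exact M₂.le_trans h1 h2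
    | some (.inl a), some (.inl b), none => exact h2.elim
    | some (.inl a), some (.inl b), some (.inr c) => exact h2.elim
    | some (.inl a), none, _ => exact h1.elim
    | some (.inl a), some (.inr b), _ => exact h1.elim
    | some (.inr a), some (.inr b), none => exact h2.elim
    | some (.inr a), some (.inr b), some (.inl c) => exact h2.elim
    | some (.inr a), none, _ => exact h1.elim
    | some (.inr a), some (.inl b), _ => exact h1.elim
  R x y :=
    match x, y with
    | some (.inl a), some (.inl b) => M₁.R a b
    | some (.inr a), some (.inr b) => M₂.R a b
    | _, _ => False
  fs1 {w w' v} h1 h2 := by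
    match w, w', v with
    | none, _, some (.inl b) => exact h2.elim
    | none, _, some (.inr b) => exact h2.elim
    | none, _, none => exact h2.elim
    | some (.inl a), some (.inl b), some (.inl c) =>
      obtain ⟨v', hR, hle⟩ := M₁.fs1 h1 h2
      exact ⟨some (.inl v'), hR, hle⟩
    | some (.inr a), some (.inr b), some (.inr c) =>
      obtain ⟨v', hR, hle⟩ := M₂.fs1 h1 h2
      exact ⟨some (.inr v'), hR, hle⟩
    | some (.inl a), none, _ => exact h1.elim
    | some (.inl a), some (.inr b), _ => exact h1.elim
    | some (.inl a), some (.inl b), none => exact h2.elim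
    | some (.inl a), some (.inl b), some (.inr c) => exact h2.elim
    | some (.inr a), none, _ => exact h1.elim
    | some (.inr a), some (.inl b), _ => exact h1.elim
    | some (.inr a), some (.inr b), none => exact h2.elim
    | some (.inr a), some (.inr b), some (.inl c) => exact h2.elim
  fs2 {w v v'} h1 h2 := by
    match w, v, v' with
    | some (.inl a), some (.inl b), some (.inl c) =>
      obtain ⟨w', hle, hR⟩ := M₁.fs2 h1 h2
      exact ⟨some (.inl w'), hle, hR⟩
    | some (.inr a), some (.inr b), some (.inr c) =>
      obtain ⟨w', hle, hR⟩ := M₂.fs2 h1 h2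
      exact ⟨some (.inr w'), hle, hR⟩
    | none, _, _ => exact h1.elim
    | some (.inl a), none, _ => exact h1.elim
    | some (.inl a), some (.inr b), _ => exact h1.elim
    | some (.inl a), some (.inl b), none => exact h2.elim
    | some (.inl a), some (.inl b), some (.inr c) => exact h2.elim
    | some (.inr a), none, _ => exact h1.elim
    | some (.inr a), some (.inl b), _ => exact h1.elim
    | some (.inr a), some (.inr b), none => exact h2.elim
    | some (.inr a), some (.inr b), some (.inl c) => exact h2.elim
  Vpos p x :=
    match x with
    | some (.inl a) => M₁.Vpos p a
    | some (.inr a) => M₂.Vpos p a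
    | none => False
  Vneg p x :=
    match x with
    | some (.inl a) => M₁.Vneg p a
    | some (.inr a) => M₂.Vneg p a
    | none => False
  Vpos_mono p {w v} h hs := by
    match w, v with
    | some (.inl a), some (.inl b) => exact M₁.Vpos_mono p h hs
    | some (.inr a), some (.inr b) => exact M₂.Vpos_mono p h hs
    | none, _ => exact hs.elim
    | some (.inl a), none => exact h.elim
    | some (.inl a), some (.inr b) => exact h.elim
    | some (.inr a), none => exact h.elim
    | some (.inr a), some (.inl b) => exact h.elim
  Vneg_mono p {w v} h hs := by
    match w, v with
    | some (.inl a), some (.inl b) => exact M₁.Vneg_mono p h hs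
    | some (.inr a), some (.inr b) => exact M₂.Vneg_mono p h hs
    | none, _ => exact hs.elim
    | some (.inl a), none => exact h.elim
    | some (.inl a), some (.inr b) => exact h.elim
    | some (.inr a), none => exact h.elim
    | some (.inr a), some (.inl b) => exact h.elim

theorem glue_sat_inl (M₁ M₂ : FSModel) (φ : MDForm) :
    ∀ b a, (glue M₁ M₂).sat b φ (some (.inl a)) ↔ M₁.sat b φ a := by
  induction φ with
  | atom p => intro b a; cases b <;> exact Iff.rfl
  | conj φ ψ ihφ ihψ =>
    intro b a
    cases b
    · exact or_congr (ihφ false a) (ihψ false a)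
    · exact and_congr (ihφ true a) (ihψ true a)
  | disj φ ψ ihφ ihψ =>
    intro b a
    cases b
    · exact and_congr (ihφ false a) (ihψ false a)
    · exact or_congr (ihφ true a) (ihψ true a)
  | impl φ ψ ihφ ihψ =>
    intro b a
    cases b <;>
    · constructor
      · intro h u hu hφ
        exact (ihψ _ u).mp (h (some (.inl u)) hu ((ihφ true u).mpr hφ))
      · intro h v hle hφ
        match v with
        | some (.inl u) => exact (ihψ _ u).mpr (h u hle ((ihφ true u).mp hφ))
        | none => exact hle.elim
        | some (.inr u) => exact hle.elim
  | neg φ ih =>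
    intro b a
    cases b
    · exact ih true a
    · exact ih false a
  | box φ ih =>
    intro b a
    cases b <;>
    · constructor
      · intro h u hu x hx
        exact (ih _ x).mp (h (some (.inl u)) hu (some (.inl x)) hx)
      · intro h v hle u hR
        match v, u with
        | some (.inl v), some (.inl u) => exact (ih _ u).mpr (h v hle u hR)
        | none, _ => exact hle.elim
        | some (.inr v), _ => exact hle.elim
        | some (.inl v), none => exact hR.elim
        | some (.inl v), some (.inr u) => exact hR.elim
  | dia φ ih =>
    intro b a
    cases b <;>
    · constructor
      · rintro ⟨u, hR, hu⟩
        match u with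
        | some (.inl u) => exact ⟨u, hR, (ih _ u).mp hu⟩
        | none => exact hR.elim
        | some (.inr u) => exact hR.elim
      · rintro ⟨u, hR, hu⟩
        exact ⟨some (.inl u), hR, (ih _ u).mpr hu⟩

theorem glue_sat_inr (M₁ M₂ : FSModel) (φ : MDForm) :
    ∀ b a, (glue M₁ M₂).sat b φ (some (.inr a)) ↔ M₂.sat b φ a := by
  induction φ with
  | atom p => intro b a; cases b <;> exact Iff.rfl
  | conj φ ψ ihφ ihψ =>
    intro b a
    cases b
    · exact or_congr (ihφ false a) (ihψ false a)
    · exact and_congr (ihφ true a) (ihψ true a)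
  | disj φ ψ ihφ ihψ =>
    intro b a
    cases b
    · exact and_congr (ihφ false a) (ihψ false a)
    · exact or_congr (ihφ true a) (ihψ true a)
  | impl φ ψ ihφ ihψ =>
    intro b a
    cases b <;>
    · constructor
      · intro h u hu hφ
        exact (ihψ _ u).mp (h (some (.inr u)) hu ((ihφ true u).mpr hφ))
      · intro h v hle hφ
        match v with
        | some (.inr u) => exact (ihψ _ u).mpr (h u hle ((ihφ true u).mp hφ))
        | none => exact hle.elim
        | some (.inl u) => exact hle.elim
  | neg φ ih =>
    intro b a
    cases b
    · exact ih true a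
    · exact ih false a
  | box φ ih =>
    intro b a
    cases b <;>
    · constructor
      · intro h u hu x hx
        exact (ih _ x).mp (h (some (.inr u)) hu (some (.inr x)) hx)
      · intro h v hle u hR
        match v, u with
        | some (.inr v), some (.inr u) => exact (ih _ u).mpr (h v hle u hR)
        | none, _ => exact hle.elim
        | some (.inl v), _ => exact hle.elim
        | some (.inr v), none => exact hR.elim
        | some (.inr v), some (.inl u) => exact hR.elim
  | dia φ ih =>
    intro b a
    cases b <;>
    · constructor
      · rintro ⟨u, hR, hu⟩
        match u with
        | some (.inr u) => exact ⟨u, hR, (ih _ u).mp hu⟩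
        | none => exact hR.elim
        | some (.inl u) => exact hR.elim
      · rintro ⟨u, hR, hu⟩
        exact ⟨some (.inr u), hR, (ih _ u).mpr hu⟩

/-- Key gluing lemma: if `φ b-satisfied or ψ b-satisfied` at the root of every glued
model, then `φ` is `b`-valid or `ψ` is `b`-valid. -/
theorem glue_key (φ ψ : MDForm) (b : Bool)
    (h : ∀ M₁ M₂ : FSModel,
      (glue M₁ M₂).sat b φ none ∨ (glue M₁ M₂).sat b ψ none) :
    (∀ (M : FSModel) (w : M.W), M.sat b φ w) ∨
    (∀ (M : FSModel) (w : M.W), M.sat b ψ w) := by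
  by_contra hc
  push_neg at hc
  obtain ⟨⟨M₁, w₁, h₁⟩, ⟨M₂, w₂, h₂⟩⟩ := hc
  rcases h M₁ M₂ with hr | hr
  · have : (glue M₁ M₂).sat b φ (some (.inl w₁)) :=
      (glue M₁ M₂).sat_mono φ b (w := none) trivial hr
    exact h₁ ((glue_sat_inl M₁ M₂ φ b w₁).mp this)
  · have : (glue M₁ M₂).sat b ψ (some (.inr w₂)) :=
      (glue M₁ M₂).sat_mono ψ b (w := none) trivial hr
    exact h₂ ((glue_sat_inr M₁ M₂ ψ b w₂).mp this)
/-- CnK has the Disjunction Property and the Constructible Falsity Property. -/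
theorem CnK_DP_and_CFP (φ ψ : MDForm) :
    (CnKvalid (MDForm.disj φ ψ) ↔ CnKvalid φ ∨ CnKvalid ψ) ∧
    (CnKvalid (MDForm.neg (MDForm.conj φ ψ)) ↔
      CnKvalid (MDForm.neg φ) ∨ CnKvalid (MDForm.neg ψ)) := by
  constructor
  · constructor
    · intro h
      exact glue_key φ ψ true (fun M₁ M₂ => h (glue M₁ M₂) none)
    · rintro (h | h) M w
      · exact Or.inl (h M w)
      · exact Or.inr (h M w)
  · constructor
    · intro h
      exact glue_key φ ψ false (fun M₁ M₂ => h (glue M₁ M₂) none)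
    · rintro (h | h) M w
      · exact Or.inl (h M w)
      · exact Or.inr (h M w)
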